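/- For all real numbers a₁, a₂, a₃, c₁, c₂, c₃, setting t_a = a₁+a₂+a₃, t_c = c₁+c₂+c₃, |a|² = a₁²+a₂²+a₃², |c|² = c₁²+c₂²+c₃², the quantity Φ₁₂ := 4|a|² + 4|c|² + (2a₁a₃ + a₂²) + (2c₁c₃ + c₂²) + (a₁c₃ + a₃c₁ + a₂c₂) - t_a² - t_c² - |a+c|² - (1/12)(t_a + t_c)² is nonnegative. -/
import Mathlib


/-- The quantity `Φ₁₂` is nonnegative for all real `a₁, a₂, a₃, c₁, c₂, c₃`. -/
theorem stmt13 (a₁ a₂ a₃ c₁ c₂ c₃ : ℝ) :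
    0 ≤ 4 * (a₁^2 + a₂^2 + a₃^2) + 4 * (c₁^2 + c₂^2 + c₃^2)
      + (2 * a₁ * a₃ + a₂^2) + (2 * c₁ * c₃ + c₂^2)
      + (a₁ * c₃ + a₃ * c₁ + a₂ * c₂)
      - (a₁ + a₂ + a₃)^2 - (c₁ + c₂ + c₃)^2
      - ((a₁ + c₁)^2 + (a₂ + c₂)^2 + (a₃ + c₃)^2)
      - (1/12) * ((a₁ + a₂ + a₃) + (c₁ + c₂ + c₃))^2 := by
  nlinarith [sq_nonneg (a₁-a₂+a₃-c₁+c₂-c₃), sq_nonneg (a₁-a₂+a₃+c₁-c₂+c₃), sq_nonneg (a₁-a₃), sq_nonneg (c₁-c₃), sq_nonneg (a₁-a₃+c₁-c₃), sq_nonneg (a₁-a₃-c₁+c₃), sq_nonneg (a₂-c₂), sq_nonneg (a₁+a₃-2*a₂), sq_nonneg (c₁+c₃-2*c₂), sq_nonneg (a₁+a₃-2*a₂+c₁+c₃-2*c₂), sq_nonneg (a₂+c₂), sq_nonneg (a₁+a₃-c₁-c₃)]
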